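/- Let τ be an optimal (W²-minimizing) transportation from μ_A to μ_B on a finite metric graph, and suppose τ admits no partition, i.e., the graph on support pairs {(a,b) : τ(a,b)>0} with edges joining pairs whose midpoint sets intersect is connected. Then there is a constant D such that d(a,b) = D whenever τ(a,b) > 0; moreover d(a,b) ≥ D for all a in the support of μ_A and b in the support of μ_B; and W^k(μ_A, μ_B) = D^k for all k. -/
import Mathlib

open Finset

variable {V : Type*} [Fintype V]

/-- `τ` is a transportation from `μA` to `μB`. -/
def IsTransport (τ : V → V → ℝ) (μA μB : V → ℝ) : Prop :=
  (∀ a b, 0 ≤ τ a b) ∧ (∀ a, ∑ b, τ a b = μA a) ∧ (∀ b, ∑ a, τ a b = μB b)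

/-- Wasserstein cost of order `k` of `τ` with respect to distance `dist`. -/
noncomputable def costk (dist : V → V → ℕ) (k : ℕ) (τ : V → V → ℝ) : ℝ :=
  ∑ a, ∑ b, τ a b * ((dist a b : ℝ)) ^ k

/-- `τ` is an optimal (W²-minimizing) transportation from `μA` to `μB`. -/
def IsOptimalTransport (dist : V → V → ℕ) (τ : V → V → ℝ) (μA μB : V → ℝ) : Prop :=
  IsTransport τ μA μB ∧
    ∀ τ' : V → V → ℝ, IsTransport τ' μA μB → costk dist 2 τ ≤ costk dist 2 τ'

/-- `W^k(μA, μB)`: the infimum of `k`-th order costs over transportations. -/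
noncomputable def Wk (dist : V → V → ℕ) (k : ℕ) (μA μB : V → ℝ) : ℝ :=
  sInf {c | ∃ τ : V → V → ℝ, IsTransport τ μA μB ∧ c = costk dist k τ}

/-- The discrete midpoint set `m̃(a,b)` of a graph `G`, encoded as a set of pairs. -/
def mtil (G : SimpleGraph V) (a b : V) : Set (V × V) :=
  {p | (p.1 = p.2 ∧ 2 * G.dist p.1 a = G.dist a b ∧ 2 * G.dist p.1 b = G.dist a b) ∨
       (G.Adj p.1 p.2 ∧ 2 * G.dist p.1 a + 1 = G.dist a b ∧
        2 * G.dist p.2 b + 1 = G.dist a b)}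

section AuxNP
set_option linter.unusedSectionVars false
variable [DecidableEq V]

noncomputable def bumpNP (a b : V) : V → V → ℝ := fun x y => if x = a ∧ y = b then 1 else 0

lemma bumpNP_row (a b x : V) : ∑ y, bumpNP a b x y = if x = a then 1 else 0 := by
  by_cases h : x = a <;> simp [bumpNP, h]

lemma bumpNP_col (a b y : V) : ∑ x, bumpNP a b x y = if y = b then 1 else 0 := by
  by_cases h : y = b <;> simp [bumpNP, h]

lemma bumpNP_cost (dist : V → V → ℕ) (k : ℕ) (a b : V) :
    ∑ x, ∑ y, bumpNP a b x y * ((dist x y : ℝ)) ^ k = ((dist a b : ℝ)) ^ k := by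
  have : ∀ x, ∑ y, bumpNP a b x y * ((dist x y : ℝ)) ^ k
      = if x = a then ((dist x b : ℝ)) ^ k else 0 := by
    intro x
    by_cases h : x = a <;> simp [bumpNP, h, ite_and]
  simp [this]

/-- Perturbing a transport by moving `ε` from pairs `(a,b),(a',b')` to `(a,b'),(a',b)`. -/
lemma perturbNP (dist : V → V → ℕ) (μA μB : V → ℝ) (σ : V → V → ℝ)
    (hσ : IsTransport σ μA μB) (a b a' b' : V) (ε : ℝ) (hε : 0 ≤ ε)
    (h1 : ε ≤ σ a b) (h2 : ε ≤ σ a' b') :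
    ∃ σ' : V → V → ℝ, IsTransport σ' μA μB ∧ ε ≤ σ' a b' ∧
      costk dist 2 σ' = costk dist 2 σ +
        ε * (((dist a b' : ℝ))^2 + ((dist a' b : ℝ))^2
             - ((dist a b : ℝ))^2 - ((dist a' b' : ℝ))^2) := by
  classical
  set σ' : V → V → ℝ := fun x y =>
    σ x y + ε * (bumpNP a b' x y + bumpNP a' b x y - bumpNP a b x y - bumpNP a' b' x y)
    with hσ'
  obtain ⟨hpos, hrow, hcol⟩ := hσ
  refine ⟨σ', ⟨?_, ?_, ?_⟩, ?_, ?_⟩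
  · intro x y
    simp only [hσ', bumpNP]
    split_ifs <;> simp_all <;> linarith [hpos a b', hpos a' b, hpos a b, hpos a' b']
  · intro x
    simp only [hσ', Finset.sum_add_distrib, Finset.sum_sub_distrib, ← Finset.mul_sum,
      bumpNP_row, hrow x]
    ring_nf
  · intro y
    simp only [hσ', Finset.sum_add_distrib, Finset.sum_sub_distrib, ← Finset.mul_sum,
      bumpNP_col, hcol y]
    ring_nf
  · simp only [hσ', bumpNP]
    split_ifs <;> simp_all <;> linarith [hpos a b', hpos a' b, hpos a b, hpos a' b']
  · simp only [hσ', costk, add_mul, sub_mul, mul_assoc, Finset.sum_add_distrib,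
      Finset.sum_sub_distrib, ← Finset.mul_sum, bumpNP_cost]

lemma costk_combo (dist : V → V → ℕ) (k : ℕ) (τ σ : V → V → ℝ) (t : ℝ) :
    costk dist k (fun x y => (1 - t) * τ x y + t * σ x y)
      = (1 - t) * costk dist k τ + t * costk dist k σ := by
  simp only [costk, add_mul, mul_assoc, Finset.sum_add_distrib, Finset.mul_sum]

lemma transport_combo (μA μB : V → ℝ) (τ σ : V → V → ℝ) (hτ : IsTransport τ μA μB)
    (hσ : IsTransport σ μA μB) (t : ℝ) (h0 : 0 ≤ t) (h1 : t ≤ 1) :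
    IsTransport (fun x y => (1 - t) * τ x y + t * σ x y) μA μB := by
  obtain ⟨hp, hr, hc⟩ := hτ; obtain ⟨hp', hr', hc'⟩ := hσ
  refine ⟨fun a b => ?_, fun a => ?_, fun b => ?_⟩ <;> dsimp only
  · nlinarith [hp a b, hp' a b]
  · simp only [Finset.sum_add_distrib, ← Finset.mul_sum, hr, hr']; ring
  · simp only [Finset.sum_add_distrib, ← Finset.mul_sum, hc, hc']; ring

/-- 2-cycle monotonicity for an optimal transport. -/
lemma swap2NP (dist : V → V → ℕ) (μA μB : V → ℝ) (τ : V → V → ℝ)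
    (hopt : IsOptimalTransport dist τ μA μB)
    (a b a' b' : V) (hab : 0 < τ a b) (hab' : 0 < τ a' b') :
    ((dist a b : ℝ))^2 + ((dist a' b' : ℝ))^2
      ≤ ((dist a b' : ℝ))^2 + ((dist a' b : ℝ))^2 := by
  set ε := min (τ a b) (τ a' b') with hεdef
  have hε : 0 < ε := lt_min hab hab'
  obtain ⟨σ', hσ', _, hcost⟩ := perturbNP dist μA μB τ hopt.1 a b a' b' ε hε.le
    (min_le_left _ _) (min_le_right _ _)
  have := hopt.2 σ' hσ'
  nlinarith [this, hcost]

lemma mtil_cross (G : SimpleGraph V) (hG : G.Connected) (x y x' y' : V) (m : V × V)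
    (h1 : m ∈ mtil G x y) (h2 : m ∈ mtil G x' y') :
    2 * G.dist x' y ≤ G.dist x y + G.dist x' y' := by
  obtain ⟨u, v⟩ := m
  simp only [mtil, Set.mem_setOf_eq, Prod.fst, Prod.snd] at h1 h2
  rcases h1 with ⟨he, hx, hy⟩ | ⟨hadj, hx, hy⟩ <;>
    rcases h2 with ⟨he', hx', hy'⟩ | ⟨hadj', hx', hy'⟩
  · subst he
    have t : G.dist x' y ≤ G.dist x' u + G.dist u y := hG.dist_triangle
    have c : G.dist x' u = G.dist u x' := G.dist_comm
    omega
  · subst he; exact absurd hadj' (G.irrefl)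
  · subst he'; exact absurd hadj (G.irrefl)
  · have t1 : G.dist x' y ≤ G.dist x' u + G.dist u y := hG.dist_triangle
    have t2 : G.dist u y ≤ G.dist u v + G.dist v y := hG.dist_triangle
    have c1 : G.dist x' u = G.dist u x' := G.dist_comm
    have huv : G.dist u v = 1 := SimpleGraph.dist_eq_one_iff_adj.mpr hadj'
    omega

/-- Two support pairs with intersecting midpoint sets are at equal distance. -/
lemma step_eq_dist (G : SimpleGraph V) (hG : G.Connected) (μA μB : V → ℝ)
    (τ : V → V → ℝ) (hopt : IsOptimalTransport G.dist τ μA μB)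
    (x y x' y' : V) (hxy : 0 < τ x y) (hxy' : 0 < τ x' y')
    (hm : (mtil G x y ∩ mtil G x' y').Nonempty) :
    G.dist x y = G.dist x' y' := by
  obtain ⟨m, hm1, hm2⟩ := hm
  have c1 := mtil_cross G hG x y x' y' m hm1 hm2
  have c2 := mtil_cross G hG x' y' x y m hm2 hm1
  have sw := swap2NP G.dist μA μB τ hopt x y x' y' hxy hxy'
  have c1R : 2 * ((G.dist x' y : ℝ)) ≤ (G.dist x y : ℝ) + (G.dist x' y' : ℝ) := by
    exact_mod_cast c1
  have c2R : 2 * ((G.dist x y' : ℝ)) ≤ (G.dist x' y' : ℝ) + (G.dist x y : ℝ) := by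
    exact_mod_cast c2
  have h0 : (0:ℝ) ≤ (G.dist x' y : ℝ) := by positivity
  have h0' : (0:ℝ) ≤ (G.dist x y' : ℝ) := by positivity
  have : ((G.dist x y : ℝ)) = ((G.dist x' y' : ℝ)) := by nlinarith
  exact_mod_cast this

/-- The chain inequality: along a chain of support pairs of an optimal transport
starting at `(a, b₀)`, one can move a little mass from `(a,b₀)` to `(a, q.2)`
without increasing the cost by more than the stated amount. -/
lemma chain_bound (G : SimpleGraph V) (hG : G.Connected) (μA μB : V → ℝ)
    (τ : V → V → ℝ) (hopt : IsOptimalTransport G.dist τ μA μB)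
    (D : ℕ) (hD : ∀ x y, 0 < τ x y → G.dist x y = D)
    (a b₀ : V) (h0 : 0 < τ a b₀) (q : V × V)
    (hchain : Relation.ReflTransGen
      (fun x y : V × V => 0 < τ x.1 x.2 ∧ 0 < τ y.1 y.2 ∧
        (mtil G x.1 x.2 ∩ mtil G y.1 y.2).Nonempty) (a, b₀) q) :
    ∃ σ ε, IsTransport σ μA μB ∧ 0 < ε ∧ ε ≤ σ a q.2 ∧
      costk G.dist 2 σ ≤ costk G.dist 2 τ
        + ε * (((G.dist a q.2 : ℝ))^2 - ((D:ℕ) : ℝ)^2) := by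
  induction hchain with
  | refl =>
      refine ⟨τ, τ a b₀, hopt.1, h0, le_refl _, ?_⟩
      simp [hD a b₀ h0]
  | @tail p q hab hbc ih =>
      obtain ⟨σ, ε, hσT, hε, hεσ, hcost⟩ := ih
      obtain ⟨hp, hq, hm⟩ := hbc
      -- the amount of mass we will move
      set s : ℝ := min ε (τ q.1 q.2) / 2 with hs
      have hspos : 0 < s := by
        have := hD q.1 q.2 hq
        positivity
      have hsε : s ≤ ε / 2 := by
        have : min ε (τ q.1 q.2) ≤ ε := min_le_left _ _
        simp only [hs]; linarith
      have hsτ : s ≤ τ q.1 q.2 / 2 := by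
        have : min ε (τ q.1 q.2) ≤ τ q.1 q.2 := min_le_right _ _
        simp only [hs]; linarith
      -- rescale the perturbation σ towards τ
      set t : ℝ := s / ε with ht
      have ht0 : 0 < t := div_pos hspos hε
      have ht1 : t ≤ 1 := by
        rw [ht, div_le_one hε]; linarith
      have htε : t * ε = s := div_mul_cancel₀ s hε.ne'
      set σ₁ : V → V → ℝ := fun x y => (1 - t) * τ x y + t * σ x y with hσ₁
      have hσ₁T : IsTransport σ₁ μA μB :=
        transport_combo μA μB τ σ hopt.1 hσT t ht0.le ht1
      have hb1 : s ≤ σ₁ a p.2 := by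
        have h1 : 0 ≤ (1 - t) * τ a p.2 :=
          mul_nonneg (by linarith) (hopt.1.1 a p.2)
        have h2 : t * ε ≤ t * σ a p.2 :=
          mul_le_mul_of_nonneg_left hεσ ht0.le
        simp only [hσ₁]; nlinarith
      have hb2 : s ≤ σ₁ q.1 q.2 := by
        have h1 : (1 - t) * τ q.1 q.2 ≥ (1/2) * τ q.1 q.2 := by
          have := hsε
          have hthalf : t ≤ 1/2 := by
            rw [ht, div_le_iff₀ hε]; linarith
          nlinarith [hq.le]
        have h2 : 0 ≤ t * σ q.1 q.2 := mul_nonneg ht0.le (hσT.1 q.1 q.2)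
        simp only [hσ₁]; nlinarith
      have hcost₁ : costk G.dist 2 σ₁ ≤ costk G.dist 2 τ
          + s * (((G.dist a p.2 : ℝ))^2 - ((D:ℕ) : ℝ)^2) := by
        have := costk_combo G.dist 2 τ σ t
        have h2 : t * costk G.dist 2 σ ≤
            t * (costk G.dist 2 τ + ε * (((G.dist a p.2 : ℝ))^2 - ((D:ℕ) : ℝ)^2)) :=
          mul_le_mul_of_nonneg_left hcost ht0.le
        rw [hσ₁, this]
        nlinarith [htε]
      -- perform the swap from (a, p.2), (q.1, q.2) to (a, q.2), (q.1, p.2)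
      obtain ⟨σ₂, hσ₂T, hσ₂b, hσ₂cost⟩ :=
        perturbNP G.dist μA μB σ₁ hσ₁T a p.2 q.1 q.2 s hspos.le hb1 hb2
      refine ⟨σ₂, s, hσ₂T, hspos, hσ₂b, ?_⟩
      -- distances
      have hdq : G.dist q.1 q.2 = D := hD q.1 q.2 hq
      have hdp : G.dist p.1 p.2 = D := hD p.1 p.2 hp
      obtain ⟨m, hm1, hm2⟩ := hm
      have hcross : 2 * G.dist q.1 p.2 ≤ G.dist p.1 p.2 + G.dist q.1 q.2 :=
        mtil_cross G hG p.1 p.2 q.1 q.2 m hm1 hm2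
      have hcrossD : G.dist q.1 p.2 ≤ D := by omega
      have hcrossR : ((G.dist q.1 p.2 : ℝ)) ≤ ((D:ℕ) : ℝ) := by exact_mod_cast hcrossD
      have h0c : (0:ℝ) ≤ (G.dist q.1 p.2 : ℝ) := by positivity
      rw [hσ₂cost, hdq]
      have hc2 : ((G.dist q.1 p.2 : ℝ))^2 ≤ ((D:ℕ) : ℝ)^2 := by nlinarith [hcrossR, h0c]
      linarith [hcost₁, mul_le_mul_of_nonneg_left hc2 hspos.le]

end AuxNP

/-- If an optimal transportation `τ` has no partition (the graph on support pairs,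
with edges joining pairs whose midpoint sets intersect, is connected), then all
support pairs are at a common distance `D`, every pair of support points of
`μA`, `μB` is at distance at least `D`, and `W^k(μA,μB) = D^k` for all `k`. -/
theorem no_partition_common_distance (G : SimpleGraph V) (hG : G.Connected)
    (μA μB : V → ℝ) (hμA0 : ∀ a, 0 ≤ μA a) (hμB0 : ∀ b, 0 ≤ μB b)
    (hμA : ∑ a, μA a = 1) (hμB : ∑ b, μB b = 1)
    (τ : V → V → ℝ) (hopt : IsOptimalTransport G.dist τ μA μB)
    (hconn : ∀ p q : V × V, 0 < τ p.1 p.2 → 0 < τ q.1 q.2 →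
      Relation.ReflTransGen
        (fun x y : V × V => 0 < τ x.1 x.2 ∧ 0 < τ y.1 y.2 ∧
          (mtil G x.1 x.2 ∩ mtil G y.1 y.2).Nonempty) p q) :
    ∃ D : ℕ,
      (∀ a b, 0 < τ a b → G.dist a b = D) ∧
      (∀ a b, 0 < μA a → 0 < μB b → D ≤ G.dist a b) ∧
      (∀ k : ℕ, Wk G.dist k μA μB = (D : ℝ) ^ k) := by
  classical
  obtain ⟨⟨hτ0, hτrow, hτcol⟩, hmin⟩ := hopt
  have hopt' : IsOptimalTransport G.dist τ μA μB := ⟨⟨hτ0, hτrow, hτcol⟩, hmin⟩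
  -- total mass of any transport against a constant
  have total : ∀ (τ' : V → V → ℝ), IsTransport τ' μA μB → ∀ c : ℝ,
      ∑ x, ∑ y, τ' x y * c = c := by
    intro τ' hT c
    have h1 : ∀ x, ∑ y, τ' x y * c = μA x * c := fun x => by
      rw [← Finset.sum_mul, hT.2.1 x]
    simp only [h1]
    rw [← Finset.sum_mul, hμA, one_mul]
  -- a support pair exists
  have hex : ∃ a b, 0 < τ a b := by
    by_contra h
    push_neg at h
    have : ∑ x, ∑ y, τ x y ≤ 0 := by
      apply Finset.sum_nonpos; intro x _
      exact Finset.sum_nonpos fun y _ => h x y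
    have h1 : ∑ x, ∑ y, τ x y = 1 := by
      simp only [hτrow]; exact hμA
    linarith
  obtain ⟨a₀, b₀, hsupp⟩ := hex
  set D : ℕ := G.dist a₀ b₀ with hDdef
  -- Claim 1: all support pairs are at distance D
  have claim1 : ∀ x y, 0 < τ x y → G.dist x y = D := by
    intro x y hxy
    have hchain := hconn (a₀, b₀) (x, y) hsupp hxy
    have : ∀ q : V × V, Relation.ReflTransGen
        (fun x y : V × V => 0 < τ x.1 x.2 ∧ 0 < τ y.1 y.2 ∧
          (mtil G x.1 x.2 ∩ mtil G y.1 y.2).Nonempty) (a₀, b₀) q →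
        G.dist q.1 q.2 = D := by
      intro q hq
      induction hq with
      | refl => rfl
      | @tail p q hab hbc ih =>
          obtain ⟨hp, hq', hm⟩ := hbc
          rw [← step_eq_dist G hG μA μB τ hopt' p.1 p.2 q.1 q.2 hp hq' hm]
          exact ih
    exact this (x, y) hchain
  -- Claim 2
  have claim2 : ∀ a b, 0 < μA a → 0 < μB b → D ≤ G.dist a b := by
    intro a b ha hb
    -- find b₁ with τ a b₁ > 0
    have hexb : ∃ b₁, 0 < τ a b₁ := by
      by_contra h
      push_neg at h
      have : ∑ y, τ a y ≤ 0 := Finset.sum_nonpos fun y _ => h y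
      rw [hτrow a] at this; linarith
    have hexa : ∃ a₁, 0 < τ a₁ b := by
      by_contra h
      push_neg at h
      have : ∑ x, τ x b ≤ 0 := Finset.sum_nonpos fun x _ => h x
      rw [hτcol b] at this; linarith
    obtain ⟨b₁, hb₁⟩ := hexb
    obtain ⟨a₁, ha₁⟩ := hexa
    have hchain := hconn (a, b₁) (a₁, b) hb₁ ha₁
    obtain ⟨σ, ε, hσT, hε, _, hcost⟩ :=
      chain_bound G hG μA μB τ hopt' D claim1 a b₁ hb₁ (a₁, b) hchain
    have hle := hmin σ hσT
    have hsq : ((D:ℕ) : ℝ)^2 ≤ ((G.dist a b : ℝ))^2 := by nlinarith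
    by_contra hcon
    push_neg at hcon
    have : ((G.dist a b : ℝ)) < ((D:ℕ) : ℝ) := by exact_mod_cast hcon
    have h0 : (0:ℝ) ≤ (G.dist a b : ℝ) := by positivity
    nlinarith
  refine ⟨D, claim1, claim2, ?_⟩
  -- Claim 3
  intro k
  have hcostτ : costk G.dist k τ = ((D:ℕ) : ℝ)^k := by
    have h1 : ∀ x y, τ x y * ((G.dist x y : ℝ))^k = τ x y * ((D:ℕ) : ℝ)^k := by
      intro x y
      rcases (hτ0 x y).lt_or_eq with h | h
      · rw [claim1 x y h]
      · rw [← h]; ring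
    unfold costk
    simp only [h1]
    exact total τ ⟨hτ0, hτrow, hτcol⟩ _
  have hlb : ∀ τ' : V → V → ℝ, IsTransport τ' μA μB →
      ((D:ℕ) : ℝ)^k ≤ costk G.dist k τ' := by
    intro τ' hT
    have h1 : ∀ x y, τ' x y * ((D:ℕ) : ℝ)^k ≤ τ' x y * ((G.dist x y : ℝ))^k := by
      intro x y
      rcases (hT.1 x y).lt_or_eq with h | h
      · have hμa : 0 < μA x := by
          rw [← hT.2.1 x]
          exact lt_of_lt_of_le h (Finset.single_le_sum
            (fun i _ => hT.1 x i) (Finset.mem_univ y))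
        have hμb : 0 < μB y := by
          rw [← hT.2.2 y]
          exact lt_of_lt_of_le h (Finset.single_le_sum
            (fun i _ => hT.1 i y) (Finset.mem_univ x))
        have hd := claim2 x y hμa hμb
        have hdR : ((D:ℕ) : ℝ) ≤ ((G.dist x y : ℝ)) := by exact_mod_cast hd
        exact mul_le_mul_of_nonneg_left (pow_le_pow_left₀ (by positivity) hdR k) h.le
      · rw [← h]; simp
    calc ((D:ℕ) : ℝ)^k = ∑ x, ∑ y, τ' x y * ((D:ℕ) : ℝ)^k := (total τ' hT _).symm
      _ ≤ ∑ x, ∑ y, τ' x y * ((G.dist x y : ℝ))^k := by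
          apply Finset.sum_le_sum; intro x _
          exact Finset.sum_le_sum fun y _ => h1 x y
      _ = costk G.dist k τ' := rfl
  have hmem : ((D:ℕ) : ℝ)^k ∈
      {c | ∃ τ' : V → V → ℝ, IsTransport τ' μA μB ∧ c = costk G.dist k τ'} :=
    ⟨τ, ⟨hτ0, hτrow, hτcol⟩, hcostτ.symm⟩
  refine le_antisymm ?_ ?_
  · exact csInf_le ⟨((D:ℕ) : ℝ)^k, fun c ⟨τ', hT, hc⟩ => hc ▸ hlb τ' hT⟩ hmem
  · exact le_csInf ⟨_, hmem⟩ fun c ⟨τ', hT, hc⟩ => hc ▸ hlb τ' hT
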